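/- arXiv:2212.03360 — 5 statements merged into one kernel-verified Lean document; each statement's English description precedes it below -/
import Mathlib

section
/- Bhatia–Davis inequality: Let μ be a probability measure on ℝ and X a random variable with a ≤ X ≤ b almost surely, mean μ_X and variance σ_X². Then σ_X² ≤ (μ_X − a)(b − μ_X). -/
open MeasureTheory

/-- Bhatia–Davis inequality: for a random variable `X` with `a ≤ X ≤ b` a.s., mean `μX` and
variance `E[(X - μX)²]`, the variance is at most `(μX - a)(b - μX)`. -/
theorem bhatia_davis {Ω : Type*} [MeasurableSpace Ω] (μ : Measure Ω) [IsProbabilityMeasure μ]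
    (X : Ω → ℝ) (a b : ℝ)
    (hXmeas : AEMeasurable X μ)
    (hX : ∀ᵐ ω ∂μ, X ω ∈ Set.Icc a b)
    (μX : ℝ) (hμX : μX = ∫ ω, X ω ∂μ) :
    ∫ ω, (X ω - μX) ^ 2 ∂μ ≤ (μX - a) * (b - μX) := by
  have hXint : Integrable X μ := by
    refine Integrable.mono' (integrable_const (max |a| |b|)) hXmeas.aestronglyMeasurable ?_
    filter_upwards [hX] with ω hω
    rcases hω with ⟨h1, h2⟩
    rw [Real.norm_eq_abs, abs_le]
    constructor
    · have : -max |a| |b| ≤ -|a| := by simp [neg_le_neg_iff, le_max_left]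
      exact this.trans ((neg_abs_le a).trans h1)
    · exact h2.trans ((le_abs_self b).trans (le_max_right _ _))
  have hsqint : Integrable (fun ω => (X ω - μX) ^ 2) μ := by
    set C := max |a - μX| |b - μX| with hC
    refine Integrable.mono' (integrable_const (C ^ 2))
      (((hXmeas.sub aemeasurable_const).pow_const 2).aestronglyMeasurable) ?_
    filter_upwards [hX] with ω hω
    rcases hω with ⟨h1, h2⟩
    have habs : |X ω - μX| ≤ C := by
      rw [abs_le]
      constructor
      · have : -C ≤ -|a - μX| := by simp [neg_le_neg_iff, hC, le_max_left]
        have := this.trans (neg_abs_le (a - μX))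
        linarith
      · have : b - μX ≤ C := (le_abs_self _).trans (le_max_right _ _)
        linarith
    have : (X ω - μX) ^ 2 ≤ C ^ 2 := by
      have := sq_abs (X ω - μX)
      nlinarith [abs_nonneg (X ω - μX)]
    simpa [Real.norm_eq_abs, abs_of_nonneg (sq_nonneg (X ω - μX))] using this
  have hlin : Integrable (fun ω => (a + b - 2 * μX) * X ω + (μX ^ 2 - a * b)) μ :=
    (hXint.const_mul _).add (integrable_const _)
  have hpt : ∀ᵐ ω ∂μ, (X ω - μX) ^ 2 ≤ (a + b - 2 * μX) * X ω + (μX ^ 2 - a * b) := by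
    filter_upwards [hX] with ω hω
    rcases hω with ⟨h1, h2⟩
    nlinarith [mul_nonneg (sub_nonneg.2 h2) (sub_nonneg.2 h1)]
  calc ∫ ω, (X ω - μX) ^ 2 ∂μ
      ≤ ∫ ω, ((a + b - 2 * μX) * X ω + (μX ^ 2 - a * b)) ∂μ :=
        integral_mono_ae hsqint hlin hpt
    _ = (a + b - 2 * μX) * μX + (μX ^ 2 - a * b) := by
        rw [integral_add (hXint.const_mul _) (integrable_const _), integral_const_mul,
          integral_const, ← hμX]
        simp
    _ = (μX - a) * (b - μX) := by ring
end

section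
/- Second-order gain from pooling values: with q* increasing and differentiable at v̂ with q*'(v̂) > 0, and F with continuous positive density, define the rent-reduction gain G(Δ) = (μ_q(Δ) − q*(v̂−Δ))·(μ_v(Δ) − (v̂−Δ))·(1 − F(v̂−Δ)), where μ_q(Δ) is the F-conditional mean of q* on [v̂−Δ, v̂+Δ] and μ_v(Δ) the conditional mean of v. Then liminf_{Δ→0} G(Δ)/Δ² ≥ q*'(v̂)·(1−F(v̂)). In particular if q*'(v̂)·(1−F(v̂)) > 0 then for small Δ, G(Δ) exceeds any quantity that is O(Δ³). -/
open MeasureTheory intervalIntegral Filter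

private lemma pool_aux_quot (num den : ℝ → ℝ) (m : ℝ) (hm : 0 < m)
    (hden : ∀ᶠ Δ in nhdsWithin (0:ℝ) (Set.Ioi 0), 2 * m * Δ ≤ den Δ)
    (hnum : ∀ ε > (0:ℝ), ∀ᶠ Δ in nhdsWithin (0:ℝ) (Set.Ioi 0), |num Δ| ≤ ε * Δ ^ 2) :
    Tendsto (fun Δ => num Δ / den Δ / Δ) (nhdsWithin (0:ℝ) (Set.Ioi 0)) (nhds 0) := by
  rw [Metric.tendsto_nhds]
  intro ε hε
  have hpos : ∀ᶠ Δ in nhdsWithin (0:ℝ) (Set.Ioi 0), 0 < Δ :=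
    eventually_mem_nhdsWithin
  filter_upwards [hden, hnum (m * ε) (by positivity), hpos] with Δ h1 h2 h3
  have hden0 : 0 < den Δ := lt_of_lt_of_le (by positivity) h1
  rw [Real.dist_eq, sub_zero]
  have habs : |num Δ / den Δ / Δ| = |num Δ| / (den Δ * Δ) := by
    rw [abs_div, abs_div, abs_of_pos hden0, abs_of_pos h3, div_div]
  rw [habs]
  have h4 : |num Δ| / (den Δ * Δ) ≤ (m * ε * Δ ^ 2) / (2 * m * Δ * Δ) :=
    div_le_div₀ (by positivity) h2 (by positivity)
      (mul_le_mul_of_nonneg_right h1 h3.le)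
  have h5 : (m * ε * Δ ^ 2) / (2 * m * Δ * Δ) = ε / 2 := by
    field_simp
  rw [h5] at h4
  linarith

set_option maxHeartbeats 1000000 in
/-- Second-order lower bound on the information-rent reduction from pooling values. -/
theorem pooling_gain_second_order (a b vh : ℝ) (hvh : vh ∈ Set.Ioo a b)
    (F f qs : ℝ → ℝ)
    (hf : ContinuousOn f (Set.Icc a b))
    (hfpos : ∀ v ∈ Set.Icc a b, 0 < f v)
    (hF : ∀ v ∈ Set.Icc a b, F v = ∫ t in a..v, f t)
    (hqmono : MonotoneOn qs (Set.Icc a b))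
    (hqd : DifferentiableAt ℝ qs vh)
    (hq' : 0 < deriv qs vh)
    (μq μv G : ℝ → ℝ)
    (hμq : ∀ Δ, μq Δ = (∫ v in vh - Δ..vh + Δ, qs v * f v) / (∫ v in vh - Δ..vh + Δ, f v))
    (hμv : ∀ Δ, μv Δ = (∫ v in vh - Δ..vh + Δ, v * f v) / (∫ v in vh - Δ..vh + Δ, f v))
    (hG : ∀ Δ, G Δ = (μq Δ - qs (vh - Δ)) * (μv Δ - (vh - Δ)) * (1 - F (vh - Δ))) :
    deriv qs vh * (1 - F vh)
      ≤ Filter.liminf (fun Δ => G Δ / Δ ^ 2) (nhdsWithin (0:ℝ) (Set.Ioi 0)) := by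
  obtain ⟨hav, hvb⟩ := hvh
  have hab : a ≤ b := le_trans hav.le hvb.le
  have hvhIcc : vh ∈ Set.Icc a b := ⟨hav.le, hvb.le⟩
  set q' := deriv qs vh with hq'def
  set L := nhdsWithin (0:ℝ) (Set.Ioi 0) with hL
  set δ0 := min (vh - a) (b - vh) with hδ0def
  have hδ0 : 0 < δ0 := lt_min (by linarith) (by linarith)
  -- inclusion of small intervals
  have hsub : ∀ Δ ∈ Set.Ioo (0:ℝ) δ0, Set.Icc (vh - Δ) (vh + Δ) ⊆ Set.Icc a b := by
    intro Δ hΔ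
    have h1 : Δ ≤ vh - a := le_trans hΔ.2.le (min_le_left _ _)
    have h2 : Δ ≤ b - vh := le_trans hΔ.2.le (min_le_right _ _)
    exact Set.Icc_subset_Icc (by linarith) (by linarith)
  have huIcc : ∀ Δ ∈ Set.Ioo (0:ℝ) δ0,
      Set.uIcc (vh - Δ) (vh + Δ) = Set.Icc (vh - Δ) (vh + Δ) := by
    intro Δ hΔ
    exact Set.uIcc_of_le (by linarith [hΔ.1])
  have hevsmall : ∀ᶠ Δ in L, Δ ∈ Set.Ioo (0:ℝ) δ0 :=
    eventually_of_mem (Ioo_mem_nhdsGT_of_mem (Set.left_mem_Ico.2 hδ0)) (fun x hx => hx)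
  -- bounds on f
  obtain ⟨M, hM⟩ := isCompact_Icc.exists_bound_of_continuousOn hf
  have hM0 : 0 ≤ M := le_trans (norm_nonneg _) (hM vh hvhIcc)
  obtain ⟨v₀, hv₀, hmin⟩ := isCompact_Icc.exists_isMinOn ⟨vh, hvhIcc⟩ hf
  set m := f v₀ with hmdef
  have hm : 0 < m := hfpos v₀ hv₀
  have hmle : ∀ v ∈ Set.Icc a b, m ≤ f v := fun v hv => hmin hv
  -- integrability
  have hcontf : ∀ Δ ∈ Set.Ioo (0:ℝ) δ0,
      ContinuousOn f (Set.uIcc (vh - Δ) (vh + Δ)) := by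
    intro Δ hΔ
    rw [huIcc Δ hΔ]
    exact hf.mono (hsub Δ hΔ)
  have hintf : ∀ Δ ∈ Set.Ioo (0:ℝ) δ0,
      IntervalIntegrable f volume (vh - Δ) (vh + Δ) := by
    intro Δ hΔ
    exact (hcontf Δ hΔ).intervalIntegrable
  have hintqf : ∀ Δ ∈ Set.Ioo (0:ℝ) δ0,
      IntervalIntegrable (fun v => qs v * f v) volume (vh - Δ) (vh + Δ) := by
    intro Δ hΔ
    have hmono : MonotoneOn qs (Set.uIcc (vh - Δ) (vh + Δ)) := by
      rw [huIcc Δ hΔ]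
      exact hqmono.mono (hsub Δ hΔ)
    exact hmono.intervalIntegrable.mul_continuousOn (hcontf Δ hΔ)
  have hintvf : ∀ Δ ∈ Set.Ioo (0:ℝ) δ0,
      IntervalIntegrable (fun v => (v - vh) * f v) volume (vh - Δ) (vh + Δ) := by
    intro Δ hΔ
    exact (((continuousOn_id.sub continuousOn_const).mul (hcontf Δ hΔ))).intervalIntegrable
  have hintqsf : ∀ Δ ∈ Set.Ioo (0:ℝ) δ0,
      IntervalIntegrable (fun v => (qs v - qs vh) * f v) volume (vh - Δ) (vh + Δ) := by
    intro Δ hΔ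
    have : (fun v => (qs v - qs vh) * f v)
        = fun v => qs v * f v - qs vh * f v := by funext v; ring
    rw [this]
    exact (hintqf Δ hΔ).sub ((hintf Δ hΔ).const_mul _)
  -- notation for numerators / denominator
  set den : ℝ → ℝ := fun Δ => ∫ v in vh - Δ..vh + Δ, f v with hden_def
  set numv : ℝ → ℝ := fun Δ => ∫ v in vh - Δ..vh + Δ, (v - vh) * f v with hnumv_def
  set numq : ℝ → ℝ := fun Δ => ∫ v in vh - Δ..vh + Δ, (qs v - qs vh) * f v with hnumq_def
  -- lower bound on den
  have hdenlb : ∀ Δ ∈ Set.Ioo (0:ℝ) δ0, 2 * m * Δ ≤ den Δ := by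
    intro Δ hΔ
    have h1 : ∫ _v in vh - Δ..vh + Δ, m ≤ den Δ := by
      apply integral_mono_on (by linarith [hΔ.1]) intervalIntegrable_const (hintf Δ hΔ)
      intro x hx
      exact hmle x (hsub Δ hΔ hx)
    rw [intervalIntegral.integral_const, smul_eq_mul] at h1
    nlinarith [h1]
  have hdenpos : ∀ Δ ∈ Set.Ioo (0:ℝ) δ0, 0 < den Δ := by
    intro Δ hΔ
    have := hdenlb Δ hΔ
    nlinarith [hΔ.1]
  have hdenev : ∀ᶠ Δ in L, 2 * m * Δ ≤ den Δ := by
    filter_upwards [hevsmall] with Δ hΔ using hdenlb Δ hΔ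
  -- ∫ (v - vh) = 0 on symmetric interval
  have hzero : ∀ Δ : ℝ, (∫ v in vh - Δ..vh + Δ, (v - vh)) = 0 := by
    intro Δ
    have h1 : (∫ v in vh - Δ..vh + Δ, (v - vh))
        = (∫ v in vh - Δ..vh + Δ, v) - ∫ _v in vh - Δ..vh + Δ, vh :=
      intervalIntegral.integral_sub intervalIntegrable_id intervalIntegrable_const
    rw [h1, integral_id, intervalIntegral.integral_const, smul_eq_mul]
    ring
  -- estimate for numv
  have hnumv_est : ∀ ε > (0:ℝ), ∀ᶠ Δ in L, |numv Δ| ≤ ε * Δ ^ 2 := by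
    intro ε hε
    have hcf : ContinuousAt f vh :=
      hf.continuousAt (mem_nhds_iff.2 ⟨Set.Ioo a b, Set.Ioo_subset_Icc_self,
        isOpen_Ioo, ⟨hav, hvb⟩⟩)
    obtain ⟨δ1, hδ1, hδ1f⟩ := Metric.continuousAt_iff.1 hcf (ε / 4) (by linarith)
    have hev : ∀ᶠ Δ in L, Δ ∈ Set.Ioo (0:ℝ) (min δ0 δ1) :=
      eventually_of_mem (Ioo_mem_nhdsGT_of_mem
        (Set.left_mem_Ico.2 (lt_min hδ0 hδ1))) (fun x hx => hx)
    filter_upwards [hev] with Δ hΔ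
    have hΔ0 : Δ ∈ Set.Ioo (0:ℝ) δ0 := ⟨hΔ.1, lt_of_lt_of_le hΔ.2 (min_le_left _ _)⟩
    have hΔδ1 : Δ < δ1 := lt_of_lt_of_le hΔ.2 (min_le_right _ _)
    -- rewrite numv
    have hsplit : numv Δ = ∫ v in vh - Δ..vh + Δ, (v - vh) * (f v - f vh) := by
      have hint2 : IntervalIntegrable (fun v => f vh * (v - vh)) volume (vh - Δ) (vh + Δ) :=
        ((continuous_const.mul (continuous_id.sub continuous_const)).intervalIntegrable _ _)
      have h1 : (∫ v in vh - Δ..vh + Δ, (v - vh) * (f v - f vh))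
          = (∫ v in vh - Δ..vh + Δ, ((v - vh) * f v - f vh * (v - vh))) :=
        intervalIntegral.integral_congr (fun v _ => by ring)
      rw [h1, intervalIntegral.integral_sub (hintvf Δ hΔ0) hint2,
        intervalIntegral.integral_const_mul, hzero, mul_zero, sub_zero]
    rw [hsplit]
    have hbound : ∀ x ∈ Set.uIoc (vh - Δ) (vh + Δ), ‖(x - vh) * (f x - f vh)‖ ≤ Δ * (ε / 4) := by
      intro x hx
      have hx' : x ∈ Set.Icc (vh - Δ) (vh + Δ) := by
        rw [Set.uIoc_of_le (by linarith [hΔ.1])] at hx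
        exact Set.Ioc_subset_Icc_self hx
      have h1 : |x - vh| ≤ Δ := by
        rw [abs_le]; constructor <;> [linarith [hx'.1]; linarith [hx'.2]]
      have h2 : |f x - f vh| ≤ ε / 4 := by
        have : dist x vh < δ1 := by
          rw [Real.dist_eq]; exact lt_of_le_of_lt h1 hΔδ1
        exact (le_of_lt (by simpa [Real.dist_eq] using hδ1f this))
      calc ‖(x - vh) * (f x - f vh)‖ = |x - vh| * |f x - f vh| := abs_mul _ _
        _ ≤ Δ * (ε / 4) := mul_le_mul h1 h2 (abs_nonneg _) hΔ.1.le
    have h3 := intervalIntegral.norm_integral_le_of_norm_le_const hbound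
    have h4 : |vh + Δ - (vh - Δ)| = 2 * Δ := by
      rw [abs_of_pos (by linarith [hΔ.1])]; ring
    rw [h4] at h3
    calc |∫ v in vh - Δ..vh + Δ, (v - vh) * (f v - f vh)| ≤ Δ * (ε / 4) * (2 * Δ) := h3
      _ ≤ ε * Δ ^ 2 := by nlinarith [hΔ.1]
  -- estimate for numq
  have hnumq_est : ∀ ε > (0:ℝ), ∀ᶠ Δ in L, |numq Δ| ≤ ε * Δ ^ 2 := by
    intro ε hε
    have hder := hqd.hasDerivAt
    rw [hasDerivAt_iff_isLittleO] at hder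
    have hlo := hder.def (c := ε / (4 * (M + 1))) (by positivity)
    obtain ⟨δ2, hδ2, hδ2f⟩ := Metric.eventually_nhds_iff.1 hlo
    have hnv := hnumv_est (ε / (2 * (|q'| + 1))) (by positivity)
    have hev : ∀ᶠ Δ in L, Δ ∈ Set.Ioo (0:ℝ) (min δ0 δ2) :=
      eventually_of_mem (Ioo_mem_nhdsGT_of_mem
        (Set.left_mem_Ico.2 (lt_min hδ0 hδ2))) (fun x hx => hx)
    filter_upwards [hev, hnv] with Δ hΔ hnvΔ
    have hΔ0 : Δ ∈ Set.Ioo (0:ℝ) δ0 := ⟨hΔ.1, lt_of_lt_of_le hΔ.2 (min_le_left _ _)⟩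
    have hΔδ2 : Δ < δ2 := lt_of_lt_of_le hΔ.2 (min_le_right _ _)
    set r : ℝ → ℝ := fun v => qs v - qs vh - (v - vh) * q' with hrdef
    have hintrf : IntervalIntegrable (fun v => r v * f v) volume (vh - Δ) (vh + Δ) := by
      have : (fun v => r v * f v)
          = fun v => (qs v - qs vh) * f v - q' * ((v - vh) * f v) := by
        funext v; simp only [hrdef]; ring
      rw [this]
      exact (hintqsf Δ hΔ0).sub ((hintvf Δ hΔ0).const_mul _)
    have hsplit : numq Δ = (∫ v in vh - Δ..vh + Δ, r v * f v) + q' * numv Δ := by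
      have h1 : (fun v => (qs v - qs vh) * f v)
          = fun v => r v * f v + q' * ((v - vh) * f v) := by
        funext v; simp only [hrdef]; ring
      show (∫ v in vh - Δ..vh + Δ, (qs v - qs vh) * f v) = _
      rw [h1, intervalIntegral.integral_add hintrf ((hintvf Δ hΔ0).const_mul _),
        intervalIntegral.integral_const_mul]
    rw [hsplit]
    -- bound the r * f integral
    have hbound : ∀ x ∈ Set.uIoc (vh - Δ) (vh + Δ),
        ‖r x * f x‖ ≤ ε / (4 * (M + 1)) * Δ * M := by
      intro x hx
      have hx' : x ∈ Set.Icc (vh - Δ) (vh + Δ) := by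
        rw [Set.uIoc_of_le (by linarith [hΔ.1])] at hx
        exact Set.Ioc_subset_Icc_self hx
      have h1 : |x - vh| ≤ Δ := by
        rw [abs_le]; constructor <;> [linarith [hx'.1]; linarith [hx'.2]]
      have hdx : dist x vh < δ2 := by
        rw [Real.dist_eq]; exact lt_of_le_of_lt h1 hΔδ2
      have h2 : ‖qs x - qs vh - (x - vh) • q'‖ ≤ ε / (4 * (M + 1)) * ‖x - vh‖ := hδ2f hdx
      have h2' : |r x| ≤ ε / (4 * (M + 1)) * Δ := by
        have : |r x| ≤ ε / (4 * (M + 1)) * |x - vh| := by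
          simpa [hrdef, smul_eq_mul, Real.norm_eq_abs] using h2
        calc |r x| ≤ ε / (4 * (M + 1)) * |x - vh| := this
          _ ≤ ε / (4 * (M + 1)) * Δ := by
            apply mul_le_mul_of_nonneg_left h1 (by positivity)
      have h3 : |f x| ≤ M := by
        have := hM x (hsub Δ hΔ0 hx')
        simpa [Real.norm_eq_abs] using this
      calc ‖r x * f x‖ = |r x| * |f x| := abs_mul _ _
        _ ≤ ε / (4 * (M + 1)) * Δ * M :=
          mul_le_mul h2' h3 (abs_nonneg _) (mul_nonneg (by positivity) hΔ.1.le)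
    have h3 := intervalIntegral.norm_integral_le_of_norm_le_const hbound
    have h4 : |vh + Δ - (vh - Δ)| = 2 * Δ := by
      rw [abs_of_pos (by linarith [hΔ.1])]; ring
    rw [h4] at h3
    have h5 : |(∫ v in vh - Δ..vh + Δ, r v * f v)| ≤ ε / 2 * Δ ^ 2 := by
      calc |(∫ v in vh - Δ..vh + Δ, r v * f v)|
          ≤ ε / (4 * (M + 1)) * Δ * M * (2 * Δ) := h3
        _ ≤ ε / 2 * Δ ^ 2 := by
          have hM1 : M / (M + 1) ≤ 1 := by
            rw [div_le_one (by linarith)]; linarith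
          have : ε / (4 * (M + 1)) * Δ * M * (2 * Δ) = ε / 2 * (M / (M + 1)) * Δ ^ 2 := by
            field_simp; ring
          rw [this]
          nlinarith [hΔ.1, sq_nonneg Δ, mul_le_mul_of_nonneg_left hM1 (le_of_lt (half_pos hε))]
    have h6 : |q' * numv Δ| ≤ ε / 2 * Δ ^ 2 := by
      rw [abs_mul]
      calc |q'| * |numv Δ| ≤ |q'| * (ε / (2 * (|q'| + 1)) * Δ ^ 2) :=
          mul_le_mul_of_nonneg_left hnvΔ (abs_nonneg _)
        _ ≤ ε / 2 * Δ ^ 2 := by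
          have h7 : |q'| / (|q'| + 1) ≤ 1 := by
            rw [div_le_one (by positivity)]; linarith
          have : |q'| * (ε / (2 * (|q'| + 1)) * Δ ^ 2)
              = ε / 2 * (|q'| / (|q'| + 1)) * Δ ^ 2 := by
            field_simp
          rw [this]
          nlinarith [sq_nonneg Δ, mul_le_mul_of_nonneg_left h7 (le_of_lt (half_pos hε))]
    calc |(∫ v in vh - Δ..vh + Δ, r v * f v) + q' * numv Δ|
        ≤ |(∫ v in vh - Δ..vh + Δ, r v * f v)| + |q' * numv Δ| := abs_add_le _ _
      _ ≤ ε * Δ ^ 2 := by linarith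
  -- identities for μv, μq
  have hμv_id : ∀ Δ ∈ Set.Ioo (0:ℝ) δ0, μv Δ - vh = numv Δ / den Δ := by
    intro Δ hΔ
    have hd := (hdenpos Δ hΔ).ne'
    have h1 : (∫ v in vh - Δ..vh + Δ, v * f v) = numv Δ + vh * den Δ := by
      have h2 : (fun v => v * f v) = fun v => (v - vh) * f v + vh * f v := by
        funext v; ring
      show (∫ v in vh - Δ..vh + Δ, v * f v) = _
      rw [h2, intervalIntegral.integral_add (hintvf Δ hΔ) ((hintf Δ hΔ).const_mul _),
        intervalIntegral.integral_const_mul]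
    rw [hμv, h1]
    have hh : (∫ v in vh - Δ..vh + Δ, f v) = den Δ := rfl
    rw [hh]
    field_simp
    ring
  have hμq_id : ∀ Δ ∈ Set.Ioo (0:ℝ) δ0, μq Δ - qs vh = numq Δ / den Δ := by
    intro Δ hΔ
    have hd := (hdenpos Δ hΔ).ne'
    have h1 : (∫ v in vh - Δ..vh + Δ, qs v * f v) = numq Δ + qs vh * den Δ := by
      have h2 : (fun v => qs v * f v) = fun v => (qs v - qs vh) * f v + qs vh * f v := by
        funext v; ring
      show (∫ v in vh - Δ..vh + Δ, qs v * f v) = _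
      rw [h2, intervalIntegral.integral_add (hintqsf Δ hΔ) ((hintf Δ hΔ).const_mul _),
        intervalIntegral.integral_const_mul]
    rw [hμq, h1]
    have hh : (∫ v in vh - Δ..vh + Δ, f v) = den Δ := rfl
    rw [hh]
    field_simp
    ring
  -- tendsto of the pieces
  have hP3 : Tendsto (fun Δ => (μv Δ - vh) / Δ) L (nhds 0) := by
    apply Tendsto.congr' _ (pool_aux_quot numv den m hm hdenev hnumv_est)
    filter_upwards [hevsmall] with Δ hΔ
    rw [hμv_id Δ hΔ]
  have hP1 : Tendsto (fun Δ => (μq Δ - qs vh) / Δ) L (nhds 0) := by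
    apply Tendsto.congr' _ (pool_aux_quot numq den m hm hdenev hnumq_est)
    filter_upwards [hevsmall] with Δ hΔ
    rw [hμq_id Δ hΔ]
  have hP2 : Tendsto (fun Δ => (qs vh - qs (vh - Δ)) / Δ) L (nhds q') := by
    have hslope := hasDerivAt_iff_tendsto_slope.1 hqd.hasDerivAt
    have hmap : Tendsto (fun Δ : ℝ => vh - Δ) L (nhdsWithin vh {vh}ᶜ) := by
      apply tendsto_nhdsWithin_of_tendsto_nhds_of_eventually_within
      · have : Tendsto (fun Δ : ℝ => vh - Δ) (nhds 0) (nhds (vh - 0)) :=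
          (tendsto_const_nhds.sub tendsto_id)
        simpa using this.mono_left nhdsWithin_le_nhds
      · filter_upwards [hevsmall] with Δ hΔ
        simp only [Set.mem_compl_iff, Set.mem_singleton_iff]
        intro h
        have : Δ = 0 := by linarith [sub_eq_self.1 h]
        exact absurd this (ne_of_gt hΔ.1)
    have hcomp := hslope.comp hmap
    apply hcomp.congr
    intro Δ
    simp only [Function.comp_apply, slope_def_field]
    rw [show vh - Δ - vh = -Δ by ring, div_neg, ← neg_div, neg_sub]
  have hC : Tendsto (fun Δ => 1 - F (vh - Δ)) L (nhds (1 - F vh)) := by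
    have hdiff : ∀ Δ ∈ Set.Ioo (0:ℝ) δ0, F vh - F (vh - Δ) = ∫ v in vh - Δ..vh, f v := by
      intro Δ hΔ
      have hΔpos : 0 < Δ := hΔ.1
      have h1 : Δ ≤ vh - a := le_trans hΔ.2.le (min_le_left _ _)
      have hmem : vh - Δ ∈ Set.Icc a b := ⟨by linarith, by linarith⟩
      have hint1 : IntervalIntegrable f volume a vh :=
        (hf.mono (by rw [Set.uIcc_of_le hav.le]; exact Set.Icc_subset_Icc_right hvb.le)
          ).intervalIntegrable
      have hint2 : IntervalIntegrable f volume a (vh - Δ) :=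
        (hf.mono (by
          rw [Set.uIcc_of_le (by linarith : a ≤ vh - Δ)]
          exact Set.Icc_subset_Icc_right (by linarith)) ).intervalIntegrable
      rw [hF vh hvhIcc, hF (vh - Δ) hmem]
      exact intervalIntegral.integral_interval_sub_left hint1 hint2
    have hzero' : Tendsto (fun Δ => F vh - F (vh - Δ)) L (nhds 0) := by
      apply squeeze_zero_norm' (a := fun Δ => M * Δ)
      · filter_upwards [hevsmall] with Δ hΔ
        rw [hdiff Δ hΔ]
        have hbound : ∀ x ∈ Set.uIoc (vh - Δ) vh, ‖f x‖ ≤ M := by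
          intro x hx
          have hx' : x ∈ Set.Icc (vh - Δ) vh := by
            rw [Set.uIoc_of_le (by linarith [hΔ.1])] at hx
            exact Set.Ioc_subset_Icc_self hx
          apply hM
          have h1 : Δ ≤ vh - a := le_trans hΔ.2.le (min_le_left _ _)
          exact ⟨by linarith [hx'.1], le_trans hx'.2 hvb.le⟩
        have h3 := intervalIntegral.norm_integral_le_of_norm_le_const hbound
        have h4 : |vh - (vh - Δ)| = Δ := by
          rw [abs_of_pos (by linarith [hΔ.1])]; ring_nf
        rw [h4] at h3
        calc ‖∫ v in vh - Δ..vh, f v‖ ≤ M * Δ := h3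
          _ = M * Δ := rfl
      · have : Tendsto (fun Δ : ℝ => M * Δ) (nhds 0) (nhds (M * 0)) :=
          tendsto_const_nhds.mul tendsto_id
        simpa using this.mono_left nhdsWithin_le_nhds
    have h8 : Tendsto (fun Δ => (F vh - F (vh - Δ)) + (1 - F vh)) L (nhds (0 + (1 - F vh))) :=
      hzero'.add tendsto_const_nhds
    rw [zero_add] at h8
    exact h8.congr (fun Δ => by ring)
  -- assembly
  have hprod : Tendsto
      (fun Δ => (((μq Δ - qs vh) / Δ + (qs vh - qs (vh - Δ)) / Δ)
        * ((μv Δ - vh) / Δ + 1)) * (1 - F (vh - Δ))) L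
      (nhds (((0 + q') * (0 + 1)) * (1 - F vh))) :=
    ((hP1.add hP2).mul (hP3.add tendsto_const_nhds)).mul hC
  have heq : ∀ᶠ Δ in L,
      (((μq Δ - qs vh) / Δ + (qs vh - qs (vh - Δ)) / Δ)
        * ((μv Δ - vh) / Δ + 1)) * (1 - F (vh - Δ)) = G Δ / Δ ^ 2 := by
    filter_upwards [hevsmall] with Δ hΔ
    have hΔ0 : (Δ : ℝ) ≠ 0 := ne_of_gt hΔ.1
    rw [hG]
    field_simp
    ring
  have hfinal : Tendsto (fun Δ => G Δ / Δ ^ 2) L (nhds (((0 + q') * (0 + 1)) * (1 - F vh))) :=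
    hprod.congr' heq
  have hne : (L).NeBot := by
    rw [hL]
    exact nhdsGT_neBot 0
  rw [hL] at hfinal
  rw [hfinal.liminf_eq]
  apply le_of_eq
  ring
end

section
/- Combined pooling improvement: under the hypotheses of the previous two statements with q*'(v̂) > 0, φ'(v̂) finite, f(v̂) > 0 and F(v̂) < 1, there exists Δ₀ > 0 such that for all 0 < Δ < Δ₀, the profit gain from pooling values, (μ_q(Δ) − q*(v̂−Δ))(μ_v(Δ) − (v̂−Δ))(1 − F(v̂−Δ)), strictly exceeds the virtual-surplus loss from pooling qualities, ∫_{v̂−Δ}^{v̂+Δ}(φ(v)−μ_φ(Δ))(q*(v)−μ_q(Δ))f(v)dv. -/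
/-!
The loss term is an `f`-weighted covariance of `φ` and `q*` over the window `[v̂ - Δ, v̂ + Δ]`.
Both functions are differentiable at `v̂`, so on the window each of them, and hence each of its
averages, stays within `O(Δ)` of its value at `v̂`; the loss is therefore `O(Δ³)`. The gain is a
product of three factors. Since `q*` is increasing and climbs at rate about `q*'(v̂) > 0`, and `f`
is bounded above and below on `[a, b]`, both `μ_q - q*(v̂ - Δ)` and `μ_v - (v̂ - Δ)` are at least a
constant times `Δ`; and `1 - F(v̂ - Δ) ≥ 1 - F(v̂) > 0`. So the gain is of order `Δ²`, which beats
`Δ³` for small `Δ`.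
-/

open MeasureTheory intervalIntegral Filter

open Set Topology

noncomputable def weightedAvg (f g : ℝ → ℝ) (l u : ℝ) : ℝ :=
  (∫ v in l..u, g v * f v) / ∫ v in l..u, f v

section WeightedAvg

variable {f g : ℝ → ℝ} {l u : ℝ}

lemma weightedAvg_sub (hf : IntervalIntegrable f volume l u)
    (hgf : IntervalIntegrable (fun v => g v * f v) volume l u) (hden : (∫ v in l..u, f v) ≠ 0)
    (c : ℝ) : weightedAvg f g l u - c = (∫ v in l..u, (g v - c) * f v) / ∫ v in l..u, f v := by
  simp only [sub_mul, integral_sub hgf (hf.const_mul c), intervalIntegral.integral_const_mul]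
  rw [weightedAvg, sub_div, mul_div_cancel_right₀ _ hden]

lemma abs_weightedAvg_sub_le {c C : ℝ} (hlu : l ≤ u) (hf : IntervalIntegrable f volume l u)
    (hgf : IntervalIntegrable (fun v => g v * f v) volume l u) (hf0 : ∀ v ∈ Icc l u, 0 ≤ f v)
    (hden : 0 < ∫ v in l..u, f v) (hg : ∀ v ∈ Icc l u, |g v - c| ≤ C) :
    |weightedAvg f g l u - c| ≤ C := by
  rw [weightedAvg_sub hf hgf hden.ne' c, abs_div, abs_of_pos hden, div_le_iff₀ hden,
    ← intervalIntegral.integral_const_mul]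
  calc |∫ v in l..u, (g v - c) * f v| ≤ ∫ v in l..u, |(g v - c) * f v| :=
        abs_integral_le_integral_abs hlu
    _ ≤ ∫ v in l..u, C * f v := by
        refine integral_mono_on hlu ?_ (hf.const_mul C) fun v hv => ?_
        · simpa only [sub_mul] using (hgf.sub (hf.const_mul c)).abs
        · rw [abs_mul, abs_of_nonneg (hf0 v hv)]
          exact mul_le_mul_of_nonneg_right (hg v hv) (hf0 v hv)

lemma abs_integral_mul_sub_weightedAvg_le {φ : ℝ → ℝ} {φ₀ g₀ Cφ Cg M : ℝ} (hlu : l ≤ u)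
    (hf : IntervalIntegrable f volume l u)
    (hφf : IntervalIntegrable (fun v => φ v * f v) volume l u)
    (hgf : IntervalIntegrable (fun v => g v * f v) volume l u) (hf0 : ∀ v ∈ Icc l u, 0 ≤ f v)
    (hfM : ∀ v ∈ Icc l u, f v ≤ M) (hden : 0 < ∫ v in l..u, f v)
    (hφ : ∀ v ∈ Icc l u, |φ v - φ₀| ≤ Cφ) (hg : ∀ v ∈ Icc l u, |g v - g₀| ≤ Cg) :
    |∫ v in l..u, (φ v - weightedAvg f φ l u) * (g v - weightedAvg f g l u) * f v|
      ≤ 2 * Cφ * (2 * Cg) * M * (u - l) := by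
  have hφavg := abs_weightedAvg_sub_le hlu hf hφf hf0 hden hφ
  have hgavg := abs_weightedAvg_sub_le hlu hf hgf hf0 hden hg
  have hbound : ∀ v ∈ uIoc l u, ‖(φ v - weightedAvg f φ l u) * (g v - weightedAvg f g l u) * f v‖
      ≤ 2 * Cφ * (2 * Cg) * M := by
    intro v hv
    rw [uIoc_of_le hlu] at hv
    have hv : v ∈ Icc l u := Ioc_subset_Icc_self hv
    rw [Real.norm_eq_abs, abs_mul, abs_mul, abs_of_nonneg (hf0 v hv)]
    have hφv : |φ v - weightedAvg f φ l u| ≤ 2 * Cφ := by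
      linarith [abs_sub_le (φ v) φ₀ (weightedAvg f φ l u), hφ v hv,
        abs_sub_comm φ₀ (weightedAvg f φ l u)]
    have hgv : |g v - weightedAvg f g l u| ≤ 2 * Cg := by
      linarith [abs_sub_le (g v) g₀ (weightedAvg f g l u), hg v hv,
        abs_sub_comm g₀ (weightedAvg f g l u)]
    have hCφ : 0 ≤ 2 * Cφ := (abs_nonneg _).trans hφv
    have hCg : 0 ≤ 2 * Cg := (abs_nonneg _).trans hgv
    gcongr
    exacts [hf0 v hv, hfM v hv]
  simpa [abs_of_nonneg (sub_nonneg.2 hlu)] using norm_integral_le_of_norm_le_const hbound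

lemma div_le_weightedAvg_sub {w g₀ κ m M : ℝ} (hlw : l ≤ w) (hwu : w ≤ u)
    (hf : IntervalIntegrable f volume l u)
    (hgf : IntervalIntegrable (fun v => g v * f v) volume l u) (hm : 0 ≤ m)
    (hfm : ∀ v ∈ Icc l u, m ≤ f v) (hfM : ∀ v ∈ Icc l u, f v ≤ M) (hden : 0 < ∫ v in l..u, f v)
    (hκ : 0 ≤ κ) (hg₀ : ∀ v ∈ Icc l w, g₀ ≤ g v) (hgκ : ∀ v ∈ Icc w u, g₀ + κ ≤ g v) :
    κ * m * (u - w) / (M * (u - l)) ≤ weightedAvg f g l u - g₀ := by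
  have hlu := hlw.trans hwu
  have hint : IntervalIntegrable (fun v => (g v - g₀) * f v) volume l u := by
    simpa only [sub_mul] using hgf.sub (hf.const_mul g₀)
  have hw : w ∈ uIcc l u := by rw [uIcc_of_le hlu]; exact ⟨hlw, hwu⟩
  have hleft : 0 ≤ ∫ v in l..w, (g v - g₀) * f v :=
    integral_nonneg hlw fun v hv =>
      mul_nonneg (sub_nonneg.2 (hg₀ v hv)) (hm.trans (hfm v ⟨hv.1, hv.2.trans hwu⟩))
  have hright : κ * m * (u - w) ≤ ∫ v in w..u, (g v - g₀) * f v := by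
    rw [show κ * m * (u - w) = ∫ _ in w..u, κ * m by simp; ring]
    refine integral_mono_on hwu intervalIntegrable_const
      (hint.mono_set (uIcc_subset_uIcc_right hw)) fun v hv => ?_
    have hfv := hfm v ⟨hlw.trans hv.1, hv.2⟩
    have hgv := hgκ v hv
    nlinarith
  have hnum : κ * m * (u - w) ≤ ∫ v in l..u, (g v - g₀) * f v := by
    rw [← integral_add_adjacent_intervals (hint.mono_set (uIcc_subset_uIcc_left hw))
      (hint.mono_set (uIcc_subset_uIcc_right hw))]
    linarith
  have hdenM : (∫ v in l..u, f v) ≤ M * (u - l) := by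
    rw [show M * (u - l) = ∫ _ in l..u, M by simp; ring]
    exact integral_mono_on hlu hf intervalIntegrable_const hfM
  rw [weightedAvg_sub hf hgf hden.ne' g₀]
  exact div_le_div₀ ((mul_nonneg (mul_nonneg hκ hm) (sub_nonneg.2 hwu)).trans hnum) hnum hden hdenM

end WeightedAvg

lemma eventually_nhdsGT_forall_Icc {x : ℝ} {P : ℝ → Prop} (h : ∀ᶠ v in 𝓝 x, P v) :
    ∀ᶠ Δ in 𝓝[>] (0 : ℝ), ∀ v ∈ Icc (x - Δ) (x + Δ), P v := by
  obtain ⟨ε, hε, hball⟩ := Metric.eventually_nhds_iff_ball.mp h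
  filter_upwards [Ioo_mem_nhdsGT hε] with Δ hΔ v hv
  rw [← Real.closedBall_eq_Icc] at hv
  exact hball v (Metric.closedBall_subset_ball hΔ.2 hv)

lemma DifferentiableAt.exists_eventually_forall_Icc_abs_sub_le {g : ℝ → ℝ} {x : ℝ}
    (h : DifferentiableAt ℝ g x) :
    ∃ C, ∀ᶠ Δ in 𝓝[>] (0 : ℝ), ∀ v ∈ Icc (x - Δ) (x + Δ), |g v - g x| ≤ C * Δ := by
  obtain ⟨C, hC, hgC⟩ := h.hasDerivAt.isBigO_sub.exists_pos
  refine ⟨C, ?_⟩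
  filter_upwards [eventually_nhdsGT_forall_Icc hgC.bound] with Δ hΔ v hv
  have hvx : |v - x| ≤ Δ := abs_sub_le_iff.2 ⟨by linarith [hv.2], by linarith [hv.1]⟩
  simpa only [Real.norm_eq_abs] using (hΔ v hv).trans (mul_le_mul_of_nonneg_left hvx hC.le)

lemma HasDerivAt.eventually_mul_le_sub_sub {g : ℝ → ℝ} {g' x : ℝ} (h : HasDerivAt g g' x)
    (hg' : 0 < g') : ∀ᶠ Δ in 𝓝[>] (0 : ℝ), g' / 2 * Δ ≤ g x - g (x - Δ) := by
  filter_upwards [eventually_nhdsGT_forall_Icc ((hasDerivAt_iff_isLittleO.mp h).def (half_pos hg')),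
    self_mem_nhdsWithin] with Δ hΔ (hΔ0 : 0 < Δ)
  have := hΔ (x - Δ) ⟨le_rfl, by linarith⟩
  simp only [Real.norm_eq_abs, smul_eq_mul, sub_sub_cancel_left, abs_neg, abs_of_pos hΔ0] at this
  linarith [le_abs_self (g (x - Δ) - g x - -Δ * g')]

section Primitive

variable {a b : ℝ} {f F : ℝ → ℝ}

lemma continuousOn_of_eq_integral (hf : ContinuousOn f (Icc a b))
    (hF : ∀ v ∈ Icc a b, F v = ∫ t in a..v, f t) : ContinuousOn F (Icc a b) := by
  rcases le_or_gt a b with hab | hab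
  · have hprim := continuousOn_primitive_interval
      ((hf.integrableOn_Icc (μ := volume)).mono_set (uIcc_of_le hab).subset)
    rw [uIcc_of_le hab] at hprim
    exact hprim.congr hF
  · simp [Icc_eq_empty_of_lt hab]

lemma monotoneOn_of_eq_integral (hf : ContinuousOn f (Icc a b))
    (hf0 : ∀ v ∈ Icc a b, 0 ≤ f v) (hF : ∀ v ∈ Icc a b, F v = ∫ t in a..v, f t) :
    MonotoneOn F (Icc a b) := by
  intro v hv w hw hvw
  rw [hF v hv, hF w hw]
  refine integral_mono_interval le_rfl hv.1 hvw
    (ae_restrict_of_forall_mem measurableSet_Ioc fun t ht => hf0 t ⟨ht.1.le, ht.2.trans hw.2⟩)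
    ((hf.mono ?_).intervalIntegrable)
  rw [uIcc_of_le hw.1]
  exact Icc_subset_Icc le_rfl hw.2

end Primitive

section Window

variable {a b x : ℝ} {f g : ℝ → ℝ}

lemma exists_eventually_integral_mul_sub_weightedAvg_le {φ : ℝ → ℝ}
    (hx : x ∈ Ioo a b) (hf : ContinuousOn f (Icc a b)) (hfpos : ∀ v ∈ Icc a b, 0 < f v)
    (hφ : ContinuousOn φ (Icc a b)) (hg : MonotoneOn g (Icc a b))
    (hφd : DifferentiableAt ℝ φ x) (hgd : DifferentiableAt ℝ g x) :
    ∃ C, ∀ᶠ Δ in 𝓝[>] (0 : ℝ),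
      ∫ v in x - Δ..x + Δ, (φ v - weightedAvg f φ (x - Δ) (x + Δ)) *
        (g v - weightedAvg f g (x - Δ) (x + Δ)) * f v ≤ C * Δ ^ 3 := by
  obtain ⟨M, hM⟩ := isCompact_Icc.exists_bound_of_continuousOn hf
  obtain ⟨Cφ, hCφ⟩ := hφd.exists_eventually_forall_Icc_abs_sub_le
  obtain ⟨Cg, hCg⟩ := hgd.exists_eventually_forall_Icc_abs_sub_le
  refine ⟨8 * Cφ * Cg * M, ?_⟩
  filter_upwards [eventually_nhdsGT_forall_Icc (Icc_mem_nhds hx.1 hx.2), hCφ, hCg,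
    self_mem_nhdsWithin] with Δ hsub hφΔ hgΔ (hΔ : 0 < Δ)
  have hlu : x - Δ ≤ x + Δ := by linarith
  have hsub' : uIcc (x - Δ) (x + Δ) ⊆ Icc a b := by rwa [uIcc_of_le hlu]
  have hfΔ := (hf.mono hsub').intervalIntegrable (μ := volume)
  have hden := intervalIntegral_pos_of_pos_on hfΔ
    (fun v hv => hfpos v (hsub v (Ioo_subset_Icc_self hv))) (by linarith)
  calc _ ≤ |_| := le_abs_self _
    _ ≤ 2 * (Cφ * Δ) * (2 * (Cg * Δ)) * M * (x + Δ - (x - Δ)) :=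
      abs_integral_mul_sub_weightedAvg_le hlu hfΔ
        ((hφ.mono hsub').mul (hf.mono hsub')).intervalIntegrable
        ((hg.mono hsub').intervalIntegrable.mul_continuousOn (hf.mono hsub'))
        (fun v hv => (hfpos v (hsub v hv)).le)
        (fun v hv => (le_abs_self _).trans (hM v (hsub v hv)))
        hden hφΔ hgΔ
    _ = _ := by ring

lemma exists_pos_eventually_mul_sq_le_mul_weightedAvg_sub {g' : ℝ}
    (hx : x ∈ Ioo a b) (hf : ContinuousOn f (Icc a b)) (hfpos : ∀ v ∈ Icc a b, 0 < f v)
    (hg : MonotoneOn g (Icc a b)) (hgd : HasDerivAt g g' x) (hg' : 0 < g') :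
    ∃ K > 0, ∀ᶠ Δ in 𝓝[>] (0 : ℝ), K * Δ ^ 2 ≤
      (weightedAvg f g (x - Δ) (x + Δ) - g (x - Δ)) *
        (weightedAvg f (fun v => v) (x - Δ) (x + Δ) - (x - Δ)) := by
  obtain ⟨xm, hxm, hmin⟩ := isCompact_Icc.exists_isMinOn ⟨x, Ioo_subset_Icc_self hx⟩ hf
  obtain ⟨M, hM⟩ := isCompact_Icc.exists_bound_of_continuousOn hf
  set m := f xm
  have hm : 0 < m := hfpos xm hxm
  have hM0 : 0 < M := hm.trans_le ((le_abs_self _).trans (hM xm hxm))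
  refine ⟨g' * m / (4 * M) * (m / (2 * M)), by positivity, ?_⟩
  filter_upwards [eventually_nhdsGT_forall_Icc (Icc_mem_nhds hx.1 hx.2),
    hgd.eventually_mul_le_sub_sub hg', self_mem_nhdsWithin] with Δ hsub hgap (hΔ : 0 < Δ)
  have hlx : x - Δ ≤ x := by linarith
  have hxu : x ≤ x + Δ := by linarith
  have hsub' : uIcc (x - Δ) (x + Δ) ⊆ Icc a b := by rwa [uIcc_of_le (hlx.trans hxu)]
  have hfΔ := (hf.mono hsub').intervalIntegrable (μ := volume)
  have hden := intervalIntegral_pos_of_pos_on hfΔ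
    (fun v hv => hfpos v (hsub v (Ioo_subset_Icc_self hv))) (by linarith)
  have hfm : ∀ v ∈ Icc (x - Δ) (x + Δ), m ≤ f v := fun v hv => hmin (hsub v hv)
  have hfM : ∀ v ∈ Icc (x - Δ) (x + Δ), f v ≤ M :=
    fun v hv => (le_abs_self _).trans (hM v (hsub v hv))
  have hl : x - Δ ∈ Icc (x - Δ) (x + Δ) := ⟨le_rfl, hlx.trans hxu⟩
  have hgavg : g' * m / (4 * M) * Δ ≤ weightedAvg f g (x - Δ) (x + Δ) - g (x - Δ) := by
    calc _ = g' / 2 * Δ * m * (x + Δ - x) / (M * (x + Δ - (x - Δ))) := by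
          rw [add_sub_cancel_left, add_sub_sub_cancel]
          field_simp
          ring
      _ ≤ _ := div_le_weightedAvg_sub hlx hxu hfΔ
          ((hg.mono hsub').intervalIntegrable.mul_continuousOn (hf.mono hsub')) hm.le hfm hfM hden
          (by positivity) (fun v hv => hg (hsub _ hl) (hsub v ⟨hv.1, hv.2.trans hxu⟩) hv.1)
          (fun v hv => by linarith [hg (hsub x ⟨hlx, hxu⟩) (hsub v ⟨hlx.trans hv.1, hv.2⟩) hv.1])
  have hvavg : m / (2 * M) * Δ ≤ weightedAvg f (fun v => v) (x - Δ) (x + Δ) - (x - Δ) := by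
    calc _ = Δ * m * (x + Δ - x) / (M * (x + Δ - (x - Δ))) := by
          rw [add_sub_cancel_left, add_sub_sub_cancel]
          field_simp
          ring
      _ ≤ _ := div_le_weightedAvg_sub (g := fun v => v) hlx hxu hfΔ
          ((continuousOn_id.mul (hf.mono hsub')).intervalIntegrable) hm.le hfm hfM hden
          hΔ.le (fun v hv => hv.1) (fun v hv => by linarith [hv.1])
  calc _ = (g' * m / (4 * M) * Δ) * (m / (2 * M) * Δ) := by ring
    _ ≤ _ := mul_le_mul hgavg hvavg (by positivity) (le_trans (by positivity) hgavg)

end Window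

/-- For small `Δ`, the gain from pooling values strictly exceeds the virtual-surplus loss
from pooling qualities on `(v̂-Δ, v̂+Δ)`. -/
theorem pooling_improves (a b vh : ℝ) (hvh : vh ∈ Set.Ioo a b)
    (F f φ qs : ℝ → ℝ)
    (hf : ContinuousOn f (Set.Icc a b))
    (hfpos : ∀ v ∈ Set.Icc a b, 0 < f v)
    (hF : ∀ v ∈ Set.Icc a b, F v = ∫ t in a..v, f t)
    (hφ : ∀ v ∈ Set.Icc a b, φ v = v - (1 - F v) / f v)
    (hqmono : MonotoneOn qs (Set.Icc a b))
    (hqd : DifferentiableAt ℝ qs vh)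
    (hφd : DifferentiableAt ℝ φ vh)
    (hq' : 0 < deriv qs vh)
    (hFvh : F vh < 1)
    (μφ μq μv : ℝ → ℝ)
    (hμφ : ∀ Δ, μφ Δ = (∫ v in vh - Δ..vh + Δ, φ v * f v) / (∫ v in vh - Δ..vh + Δ, f v))
    (hμq : ∀ Δ, μq Δ = (∫ v in vh - Δ..vh + Δ, qs v * f v) / (∫ v in vh - Δ..vh + Δ, f v))
    (hμv : ∀ Δ, μv Δ = (∫ v in vh - Δ..vh + Δ, v * f v) / (∫ v in vh - Δ..vh + Δ, f v)) :
    ∃ Δ₀ > 0, ∀ Δ : ℝ, 0 < Δ → Δ < Δ₀ →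
      (∫ v in vh - Δ..vh + Δ, (φ v - μφ Δ) * (qs v - μq Δ) * f v)
        < (μq Δ - qs (vh - Δ)) * (μv Δ - (vh - Δ)) * (1 - F (vh - Δ)) := by
  have hFc := continuousOn_of_eq_integral hf hF
  have hφc : ContinuousOn φ (Icc a b) := by
    refine ContinuousOn.congr ?_ hφ
    exact continuousOn_id.sub ((continuousOn_const.sub hFc).div hf fun v hv => (hfpos v hv).ne')
  obtain ⟨C, hcov⟩ :=
    exists_eventually_integral_mul_sub_weightedAvg_le hvh hf hfpos hφc hqmono hφd hqd
  obtain ⟨K, hK, hgain⟩ :=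
    exists_pos_eventually_mul_sq_le_mul_weightedAvg_sub hvh hf hfpos hqmono hqd.hasDerivAt hq'
  have hsmall : ∀ᶠ Δ in 𝓝[>] (0 : ℝ), C * Δ < K * (1 - F vh) := by
    have hlim : Tendsto (fun Δ => C * Δ) (𝓝[>] 0) (𝓝 0) := by
      simpa using ((continuous_const_mul C).tendsto 0).mono_left nhdsWithin_le_nhds
    exact hlim.eventually (gt_mem_nhds (mul_pos hK (sub_pos.2 hFvh)))
  have hFΔ : ∀ᶠ Δ in 𝓝[>] (0 : ℝ), F (vh - Δ) ≤ F vh := by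
    filter_upwards [eventually_nhdsGT_forall_Icc (Icc_mem_nhds hvh.1 hvh.2), self_mem_nhdsWithin]
      with Δ hsub (hΔ : 0 < Δ)
    exact monotoneOn_of_eq_integral hf (fun v hv => (hfpos v hv).le) hF
      (hsub _ ⟨le_rfl, by linarith⟩) (Ioo_subset_Icc_self hvh) (by linarith)
  obtain ⟨Δ₀, hΔ₀, hΔ₀sub⟩ :=
    mem_nhdsGT_iff_exists_Ioo_subset.mp (hcov.and (hgain.and (hsmall.and hFΔ)))
  refine ⟨Δ₀, hΔ₀, fun Δ hΔ hΔΔ₀ => ?_⟩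
  obtain ⟨hcovΔ, hgainΔ, hsmallΔ, hFΔ⟩ := hΔ₀sub ⟨hΔ, hΔΔ₀⟩
  rw [hμφ, hμq, hμv]
  calc _ ≤ C * Δ ^ 3 := hcovΔ
    _ = C * Δ * Δ ^ 2 := by ring
    _ < K * (1 - F vh) * Δ ^ 2 := by gcongr
    _ ≤ K * Δ ^ 2 * (1 - F (vh - Δ)) := by rw [mul_right_comm]; gcongr
    _ ≤ _ := mul_le_mul_of_nonneg_right hgainΔ (by linarith)
end

section
/- Conditional-mean step function is a mean-preserving contraction: let F be a CDF on [v̲,v̄] and let 0 = x₀ < x₁ < … < x_n = 1 be a partition of [0,1]. Define G^{-1}(t) = (∫_{x_{i}}^{x_{i+1}} F^{-1}(s)ds)/(x_{i+1} − x_i) for t ∈ [x_i, x_{i+1}). Then G^{-1} is non-decreasing and ∫_x^1 G^{-1}(t)dt ≤ ∫_x^1 F^{-1}(t)dt for all x ∈ [0,1], with equality at x = 0. -/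
/-!
On each cell `[xᵢ, xᵢ₊₁]` the mean of the monotone `F⁻¹` lies between its values at the two
endpoints, so the cell means increase and `G⁻¹` is monotone. `G⁻¹` and `F⁻¹` have the same
integral over every cell, hence the same tail integrals from every partition point on. For `y`
inside a cell, `∫_y^{xᵢ₊₁} F⁻¹` is at least the fraction `(xᵢ₊₁ - y) / (xᵢ₊₁ - xᵢ)` of the cell
integral, since it averages the larger values of `F⁻¹`; this gives the tail inequality.
-/

open MeasureTheory intervalIntegral Set

section MonotoneOn

variable {f : ℝ → ℝ} {a b y : ℝ}

theorem MonotoneOn.intervalIntegrable_of_le (hf : MonotoneOn f (Icc a b)) (hab : a ≤ b) :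
    IntervalIntegrable f volume a b :=
  MonotoneOn.intervalIntegrable (by rwa [uIcc_of_le hab])

theorem MonotoneOn.mul_apply_left_le_integral (hf : MonotoneOn f (Icc a b)) (hab : a ≤ b) :
    (b - a) * f a ≤ ∫ s in a..b, f s := by
  have h := integral_mono_on hab intervalIntegrable_const
    (hf.intervalIntegrable_of_le hab) fun t ht => hf (left_mem_Icc.2 hab) ht ht.1
  simpa [mul_comm] using h

theorem MonotoneOn.integral_le_mul_apply_right (hf : MonotoneOn f (Icc a b)) (hab : a ≤ b) :
    ∫ s in a..b, f s ≤ (b - a) * f b := by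
  have h := integral_mono_on hab (hf.intervalIntegrable_of_le hab)
    intervalIntegrable_const fun t ht => hf ht (right_mem_Icc.2 hab) ht.2
  simpa [mul_comm] using h

theorem MonotoneOn.apply_left_le_integral_div (hf : MonotoneOn f (Icc a b)) (hab : a < b) :
    f a ≤ (∫ s in a..b, f s) / (b - a) := by
  rw [le_div_iff₀ (sub_pos.2 hab), mul_comm]
  exact hf.mul_apply_left_le_integral hab.le

theorem MonotoneOn.integral_div_le_apply_right (hf : MonotoneOn f (Icc a b)) (hab : a < b) :
    (∫ s in a..b, f s) / (b - a) ≤ f b := by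
  rw [div_le_iff₀ (sub_pos.2 hab), mul_comm]
  exact hf.integral_le_mul_apply_right hab.le

theorem MonotoneOn.mul_integral_div_le_integral (hf : MonotoneOn f (Icc a b)) (hay : a ≤ y)
    (hyb : y ≤ b) : (b - y) * ((∫ s in a..b, f s) / (b - a)) ≤ ∫ s in y..b, f s := by
  rcases (hay.trans hyb).eq_or_lt with rfl | hab
  · simp [le_antisymm hyb hay]
  have hfy : MonotoneOn f (Icc a y) := hf.mono (Icc_subset_Icc_right hyb)
  have hyf : MonotoneOn f (Icc y b) := hf.mono (Icc_subset_Icc_left hay)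
  have head := hfy.integral_le_mul_apply_right hay
  have tail := hyf.mul_apply_left_le_integral hyb
  rw [← integral_add_adjacent_intervals (hfy.intervalIntegrable_of_le hay)
    (hyf.intervalIntegrable_of_le hyb), mul_div_assoc',
    div_le_iff₀ (sub_pos.2 hab)]
  nlinarith [mul_le_mul_of_nonneg_left head (sub_nonneg.2 hyb),
    mul_le_mul_of_nonneg_left tail (sub_nonneg.2 hay)]

end MonotoneOn

noncomputable def cellMean (f : ℝ → ℝ) (x : ℕ → ℝ) (i : ℕ) : ℝ :=
  (∫ s in x i..x (i + 1), f s) / (x (i + 1) - x i)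

/-- `g` is `G⁻¹` for `f = F⁻¹` and the partition `x 0 < ⋯ < x n`; `g (x n)` is left free. -/
def IsCellMeanStep (g f : ℝ → ℝ) (x : ℕ → ℝ) (n : ℕ) : Prop :=
  ∀ i < n, ∀ t ∈ Ico (x i) (x (i + 1)), g t = cellMean f x i

section Partition

variable {f g : ℝ → ℝ} {x : ℕ → ℝ} {n i : ℕ} {y : ℝ}

theorem exists_lt_mem_Ico_of_mem_Ico (hy : y ∈ Ico (x 0) (x n)) :
    ∃ i < n, y ∈ Ico (x i) (x (i + 1)) := by
  induction n with
  | zero => exact absurd hy.2 (not_lt.2 hy.1)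
  | succ n ih =>
    by_cases hyn : y < x n
    · obtain ⟨i, hi, hyi⟩ := ih ⟨hy.1, hyn⟩
      exact ⟨i, by omega, hyi⟩
    · exact ⟨n, n.lt_succ_self, not_lt.1 hyn, hy.2⟩

theorem StrictMonoOn.apply_lt_apply_succ_of_Iic (hx : StrictMonoOn x (Iic n)) (hin : i < n) :
    x i < x (i + 1) :=
  hx (show i ≤ n by omega) (show i + 1 ≤ n by omega) i.lt_succ_self

theorem MonotoneOn.apply_mem_Icc_of_Iic (hx : MonotoneOn x (Iic n)) (hin : i ≤ n) :
    x i ∈ Icc (x 0) (x n) :=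
  ⟨hx n.zero_le hin i.zero_le, hx hin (le_refl n) hin⟩

theorem MonotoneOn.mono_cell (hf : MonotoneOn f (Icc (x 0) (x n))) (hx : MonotoneOn x (Iic n))
    (hin : i < n) : MonotoneOn f (Icc (x i) (x (i + 1))) :=
  hf.mono (Icc_subset_Icc (hx.apply_mem_Icc_of_Iic hin.le).1 (hx.apply_mem_Icc_of_Iic hin).2)

theorem cellMean_mono (hf : MonotoneOn f (Icc (x 0) (x n))) (hx : StrictMonoOn x (Iic n))
    {i j : ℕ} (hij : i ≤ j) (hjn : j < n) : cellMean f x i ≤ cellMean f x j := by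
  rcases hij.eq_or_lt with rfl | hij
  · exact le_rfl
  have hin : i < n := hij.trans hjn
  calc cellMean f x i ≤ f (x (i + 1)) :=
        (hf.mono_cell hx.monotoneOn hin).integral_div_le_apply_right
          (hx.apply_lt_apply_succ_of_Iic hin)
    _ ≤ f (x j) := hf (hx.monotoneOn.apply_mem_Icc_of_Iic hin)
        (hx.monotoneOn.apply_mem_Icc_of_Iic hjn.le)
        (hx.monotoneOn (show i + 1 ≤ n by omega) (show j ≤ n by omega) hij)
    _ ≤ cellMean f x j :=
        (hf.mono_cell hx.monotoneOn hjn).apply_left_le_integral_div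
          (hx.apply_lt_apply_succ_of_Iic hjn)

namespace IsCellMeanStep

theorem intervalIntegrable_of_mem_cell (hg : IsCellMeanStep g f x n) (hin : i < n)
    (hy : y ∈ Icc (x i) (x (i + 1))) : IntervalIntegrable g volume y (x (i + 1)) := by
  refine (intervalIntegrable_congr_uIoo fun t ht => ?_).2
    (intervalIntegrable_const (c := cellMean f x i))
  rw [uIoo_of_le hy.2] at ht
  exact hg i hin t ⟨hy.1.trans ht.1.le, ht.2⟩

theorem integral_of_mem_cell (hg : IsCellMeanStep g f x n) (hin : i < n)
    (hy : y ∈ Icc (x i) (x (i + 1))) :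
    ∫ t in y..x (i + 1), g t = (x (i + 1) - y) * cellMean f x i := by
  rw [integral_congr_Ioo_of_le hy.2 (g := fun _ => cellMean f x i)
      fun t ht => hg i hin t ⟨hy.1.trans ht.1.le, ht.2⟩,
    intervalIntegral.integral_const, smul_eq_mul]

theorem integral_cell (hg : IsCellMeanStep g f x n) (hin : i < n) (hxi : x i < x (i + 1)) :
    ∫ t in x i..x (i + 1), g t = ∫ t in x i..x (i + 1), f t := by
  rw [hg.integral_of_mem_cell hin (left_mem_Icc.2 hxi.le), cellMean,
    mul_div_cancel₀ _ (sub_pos.2 hxi).ne']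

theorem intervalIntegrable (hg : IsCellMeanStep g f x n) (hx : StrictMonoOn x (Iic n))
    {j : ℕ} (hij : i ≤ j) (hjn : j ≤ n) : IntervalIntegrable g volume (x i) (x j) :=
  IntervalIntegrable.trans_iterate_Ico hij fun k hk =>
    have hkn : k < n := hk.2.trans_le hjn
    hg.intervalIntegrable_of_mem_cell hkn (left_mem_Icc.2 (hx.apply_lt_apply_succ_of_Iic hkn).le)

theorem integral_tail_eq (hg : IsCellMeanStep g f x n) (hf : MonotoneOn f (Icc (x 0) (x n)))
    (hx : StrictMonoOn x (Iic n)) (hin : i ≤ n) :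
    ∫ t in x i..x n, g t = ∫ t in x i..x n, f t := by
  have hfint : ∀ k ∈ Ico i n, IntervalIntegrable f volume (x k) (x (k + 1)) := fun k hk =>
    (hf.mono_cell hx.monotoneOn hk.2).intervalIntegrable_of_le
      (hx.apply_lt_apply_succ_of_Iic hk.2).le
  rw [← sum_integral_adjacent_intervals_Ico hin fun k hk => hg.intervalIntegrable hx
      k.le_succ hk.2, ← sum_integral_adjacent_intervals_Ico hin hfint]
  refine Finset.sum_congr rfl fun k hk => ?_
  have hkn : k < n := (Finset.mem_Ico.1 hk).2
  exact hg.integral_cell hkn (hx.apply_lt_apply_succ_of_Iic hkn)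

theorem integral_tail_le (hg : IsCellMeanStep g f x n) (hf : MonotoneOn f (Icc (x 0) (x n)))
    (hx : StrictMonoOn x (Iic n)) (hy : y ∈ Icc (x 0) (x n)) :
    ∫ t in y..x n, g t ≤ ∫ t in y..x n, f t := by
  rcases hy.2.eq_or_lt with rfl | hyn
  · simp
  obtain ⟨i, hin, hyi⟩ := exists_lt_mem_Ico_of_mem_Ico ⟨hy.1, hyn⟩
  have hyi' : y ∈ Icc (x i) (x (i + 1)) := Ico_subset_Icc_self hyi
  have hxi := hx.monotoneOn.apply_mem_Icc_of_Iic (show i + 1 ≤ n from hin)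
  rw [← integral_add_adjacent_intervals (hg.intervalIntegrable_of_mem_cell hin hyi')
      (hg.intervalIntegrable hx hin le_rfl),
    ← integral_add_adjacent_intervals
      ((hf.mono (Icc_subset_Icc hy.1 hxi.2)).intervalIntegrable_of_le hyi'.2)
      ((hf.mono (Icc_subset_Icc hxi.1 le_rfl)).intervalIntegrable_of_le hxi.2),
    hg.integral_of_mem_cell hin hyi', hg.integral_tail_eq hf hx hin]
  gcongr
  exact (hf.mono_cell hx.monotoneOn hin).mul_integral_div_le_integral hyi.1 hyi'.2

theorem monotoneOn (hg : IsCellMeanStep g f x n) (hf : MonotoneOn f (Icc (x 0) (x n)))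
    (hx : StrictMonoOn x (Iic n)) : MonotoneOn g (Ico (x 0) (x n)) := by
  intro s hs t ht hst
  obtain ⟨i, hin, hsi⟩ := exists_lt_mem_Ico_of_mem_Ico hs
  obtain ⟨j, hjn, htj⟩ := exists_lt_mem_Ico_of_mem_Ico ht
  have hij : i ≤ j := by
    by_contra! hji
    have : x (j + 1) ≤ x i := hx.monotoneOn (show j + 1 ≤ n by omega) hin.le hji
    linarith [hsi.1, htj.2]
  rw [hg i hin s hsi, hg j hjn t htj]
  exact cellMean_mono hf hx hij hjn

end IsCellMeanStep

end Partition

theorem conditional_mean_step_mpc_general (n : ℕ) (x : ℕ → ℝ)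
    (hx0 : x 0 = 0) (hxn : x n = 1)
    (hxmono : ∀ i, i < n → x i < x (i + 1))
    (Finv : ℝ → ℝ) (hFmono : MonotoneOn Finv (Set.Icc 0 1))
    (Ginv : ℝ → ℝ)
    (hG : ∀ i, i < n → ∀ t ∈ Set.Ico (x i) (x (i + 1)),
      Ginv t = (∫ s in x i..x (i + 1), Finv s) / (x (i + 1) - x i)) :
    MonotoneOn Ginv (Set.Ico 0 1) ∧
    (∀ y ∈ Set.Icc (0:ℝ) 1, ∫ t in y..1, Ginv t ≤ ∫ t in y..1, Finv t) ∧
    (∫ t in (0:ℝ)..1, Ginv t = ∫ t in (0:ℝ)..1, Finv t) := by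
  have hx : StrictMonoOn x (Set.Iic n) := strictMonoOn_Iic_of_lt_succ hxmono
  have hg : IsCellMeanStep Ginv Finv x n := hG
  rw [← hx0, ← hxn] at hFmono ⊢
  exact ⟨hg.monotoneOn hFmono hx, fun y hy => hg.integral_tail_le hFmono hx hy,
    hg.integral_tail_eq hFmono hx n.zero_le⟩

/-- The conditional-mean step function of a quantile function over a partition of `[0,1]` is
non-decreasing and is a mean-preserving contraction in the quantile (tail-integral) sense. -/
theorem conditional_mean_step_mpc (n : ℕ) (hn : 1 ≤ n) (x : ℕ → ℝ)
    (hx0 : x 0 = 0) (hxn : x n = 1)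
    (hxmono : ∀ i, i < n → x i < x (i + 1))
    (Finv : ℝ → ℝ) (hFmono : MonotoneOn Finv (Set.Icc 0 1))
    (hFint : IntervalIntegrable Finv MeasureTheory.volume 0 1)
    (Ginv : ℝ → ℝ)
    (hG : ∀ i, i < n → ∀ t ∈ Set.Ico (x i) (x (i + 1)),
      Ginv t = (∫ s in x i..x (i + 1), Finv s) / (x (i + 1) - x i)) :
    MonotoneOn Ginv (Set.Ico 0 1) ∧
    (∀ y ∈ Set.Icc (0:ℝ) 1, ∫ t in y..1, Ginv t ≤ ∫ t in y..1, Finv t) ∧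
    (∫ t in (0:ℝ)..1, Ginv t = ∫ t in (0:ℝ)..1, Finv t) :=
  conditional_mean_step_mpc_general n x hx0 hxn hxmono Finv hFmono Ginv hG
end

section
/- Integration-by-parts revenue identity: let G^{-1} : [0,1] → ℝ be continuously differentiable and non-decreasing and R^{-1} : [0,1] → ℝ₊ be non-decreasing and right-continuous (of bounded variation). Then ∫_0^1 (G^{-1}(t)R^{-1}(t) − ∫_0^t R^{-1}(s) dG^{-1}(s)) dt = ∫_0^1 G^{-1}(t)(1−t) dR^{-1}(t) + R^{-1}(0)·G^{-1}(0), where dR^{-1} is the Lebesgue–Stieltjes measure of R^{-1}. -/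
/-! Both sides come from swapping the order of integration over a triangle. Writing
`G s = G a + ∫ₐˢ G'` and applying Fubini on `{u < s}` gives the Stieltjes integration by parts
`∫_{(a,t]} G dR = G t R t - G a R a - ∫ₐᵗ R G'`, so the integrand on the left is
`∫_{(0,t]} G dR + R 0 G 0`. Applying Fubini once more, on `{s ≤ t}`, integrates out `t` and leaves
the weight `1 - s` against `dR`. -/

open MeasureTheory intervalIntegral Set

section Swap

variable {α β : Type*} [MeasurableSpace α] [MeasurableSpace β] {μ : Measure α} {ν : Measure β}
  {S : Set (α × β)} {f : β → ℝ}

lemma integral_indicator_prodMk_left (hS : MeasurableSet S) (a : α) :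
    ∫ b, S.indicator (fun p ↦ f p.2) (a, b) ∂ν = ∫ b in Prod.mk a ⁻¹' S, f b ∂ν := by
  rw [← MeasureTheory.integral_indicator (measurable_prodMk_left hS)]
  rfl

variable [IsFiniteMeasure μ] [SFinite ν]

lemma integrable_indicator_comp_snd (hS : MeasurableSet S) (hf : Integrable f ν) :
    Integrable (S.indicator fun p ↦ f p.2) (μ.prod ν) :=
  (hf.comp_snd μ).indicator hS

lemma integrable_setIntegral_preimage_prodMk (hS : MeasurableSet S) (hf : Integrable f ν) :
    Integrable (fun a ↦ ∫ b in Prod.mk a ⁻¹' S, f b ∂ν) μ := by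
  simpa only [integral_indicator_prodMk_left hS] using
    (integrable_indicator_comp_snd (μ := μ) hS hf).integral_prod_left

lemma integral_setIntegral_preimage_prodMk (hS : MeasurableSet S) (hf : Integrable f ν) :
    ∫ a, (∫ b in Prod.mk a ⁻¹' S, f b ∂ν) ∂μ = ∫ b, μ.real ((·, b) ⁻¹' S) * f b ∂ν := by
  have hswap := integral_integral_swap (f := fun a b ↦ S.indicator (fun p ↦ f p.2) (a, b))
    (integrable_indicator_comp_snd (μ := μ) hS hf)
  simp only [integral_indicator_prodMk_left hS] at hswap
  rw [hswap]
  congr 1 with b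
  rw [← smul_eq_mul, ← integral_indicator_const _ (measurable_prodMk_right hS)]
  rfl

end Swap

namespace StieltjesFunction

variable (R : StieltjesFunction ℝ) {a b : ℝ}

instance isFiniteMeasure_restrict_Ioc : IsFiniteMeasure (R.measure.restrict (Ioc a b)) :=
  isFiniteMeasure_restrict.2 (by simp [R.measure_Ioc])

lemma measureReal_restrict_Ioc_Ioi {u : ℝ} (hu : u ∈ Ioc a b) :
    (R.measure.restrict (Ioc a b)).real (Ioi u) = R b - R u := by
  rw [measureReal_restrict_apply _root_.measurableSet_Ioi, inter_comm, Ioc_inter_Ioi,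
    max_eq_right hu.1.le, measureReal_def, R.measure_Ioc,
    ENNReal.toReal_ofReal (sub_nonneg.2 (R.mono hu.2))]

lemma integral_Ioc_eq_sub_integral_mul_deriv {G : ℝ → ℝ} (hG : ContDiff ℝ 1 G) (hab : a ≤ b) :
    ∫ s in Ioc a b, G s ∂(R.measure) = G b * R b - G a * R a - ∫ s in a..b, R s * deriv G s := by
  have hG' : Continuous (deriv G) := hG.continuous_deriv le_rfl
  have hFTC : ∀ s, ∫ u in a..s, deriv G u = G s - G a := fun s ↦
    integral_deriv_eq_sub (fun x _ ↦ (hG.differentiable one_ne_zero).differentiableAt)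
      (hG'.intervalIntegrable _ _)
  have hGint : IntegrableOn G (Ioc a b) R.measure :=
    hG.continuous.integrableOn_Icc.mono_set Ioc_subset_Icc_self
  have hinner : ∀ s ∈ Ioc a b,
      ∫ u in Iio s, deriv G u ∂(volume.restrict (Ioc a b)) = G s - G a := fun s hs ↦ by
    have hinter : Iio s ∩ Ioc a b = Ioo a s := by
      ext x; constructor
      · rintro ⟨hxs, hax, -⟩; exact ⟨hax, hxs⟩
      · rintro ⟨hax, hxs⟩; exact ⟨hxs, hax, hxs.le.trans hs.2⟩
    rw [Measure.restrict_restrict _root_.measurableSet_Iio, hinter,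
      ← integral_Ioc_eq_integral_Ioo, ← integral_of_le hs.1.le, hFTC]
  have hmain : ∫ s in Ioc a b, G s ∂(R.measure) - (R b - R a) * G a
      = R b * (G b - G a) - ∫ u in a..b, R u * deriv G u := calc
    _ = ∫ s in Ioc a b, (G s - G a) ∂(R.measure) := by
      rw [integral_sub hGint (integrableOn_const measure_Ioc_lt_top.ne), setIntegral_const,
        measureReal_def, R.measure_Ioc, ENNReal.toReal_ofReal (sub_nonneg.2 (R.mono hab)),
        smul_eq_mul]
    _ = ∫ s, (∫ u in Iio s, deriv G u ∂(volume.restrict (Ioc a b)))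
          ∂(R.measure.restrict (Ioc a b)) :=
      (setIntegral_congr_fun measurableSet_Ioc hinner).symm
    -- The strict inequality makes the sections `Ioc u b`, which see the atoms of `dR` correctly.
    _ = ∫ u, (R.measure.restrict (Ioc a b)).real (Ioi u) * deriv G u ∂(volume.restrict (Ioc a b)) :=
      integral_setIntegral_preimage_prodMk (S := {p : ℝ × ℝ | p.2 < p.1})
        (measurableSet_lt measurable_snd measurable_fst)
        (hG'.integrableOn_Icc.mono_set Ioc_subset_Icc_self)
    _ = ∫ u in a..b, (R b * deriv G u - R u * deriv G u) := by
      rw [integral_of_le hab]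
      refine setIntegral_congr_fun measurableSet_Ioc fun u hu ↦ ?_
      rw [R.measureReal_restrict_Ioc_Ioi hu, sub_mul]
    _ = R b * (G b - G a) - ∫ u in a..b, R u * deriv G u := by
      rw [integral_sub ((hG'.intervalIntegrable a b).const_mul _)
          (R.mono.intervalIntegrable.mul_continuousOn hG'.continuousOn),
        intervalIntegral.integral_const_mul, hFTC]
  linarith

variable {G : ℝ → ℝ}

lemma setIntegral_Iic_restrict_Ioc {t : ℝ} (ht : t ≤ b) :
    ∫ s in Iic t, G s ∂(R.measure.restrict (Ioc a b)) = ∫ s in Ioc a t, G s ∂(R.measure) := by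
  rw [Measure.restrict_restrict _root_.measurableSet_Iic, Iic_inter_Ioc_of_le ht]

lemma intervalIntegrable_setIntegral_Ioc (hG : Continuous G) (hab : a ≤ b) :
    IntervalIntegrable (fun t ↦ ∫ s in Ioc a t, G s ∂(R.measure)) volume a b := by
  rw [intervalIntegrable_iff_integrableOn_Ioc_of_le hab]
  have hGint : IntegrableOn G (Ioc a b) R.measure :=
    hG.integrableOn_Icc.mono_set Ioc_subset_Icc_self
  refine (integrable_setIntegral_preimage_prodMk (S := {p : ℝ × ℝ | p.2 ≤ p.1})
      (μ := volume.restrict (Ioc a b)) (measurableSet_le measurable_snd measurable_fst)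
      hGint).congr ?_
  filter_upwards [ae_restrict_mem measurableSet_Ioc] with t ht
  exact R.setIntegral_Iic_restrict_Ioc ht.2

lemma integral_setIntegral_Ioc (hG : Continuous G) (hab : a ≤ b) :
    ∫ t in a..b, ∫ s in Ioc a t, G s ∂(R.measure) = ∫ s in Ioc a b, G s * (b - s) ∂(R.measure) := by
  calc
    _ = ∫ t, (∫ s in Iic t, G s ∂(R.measure.restrict (Ioc a b))) ∂(volume.restrict (Ioc a b)) := by
      rw [integral_of_le hab]
      exact setIntegral_congr_fun measurableSet_Ioc fun t ht ↦
        (R.setIntegral_Iic_restrict_Ioc ht.2).symm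
    _ = ∫ s, (volume.restrict (Ioc a b)).real (Ici s) * G s ∂(R.measure.restrict (Ioc a b)) :=
      integral_setIntegral_preimage_prodMk (S := {p : ℝ × ℝ | p.2 ≤ p.1})
        (measurableSet_le measurable_snd measurable_fst)
        (hG.integrableOn_Icc.mono_set Ioc_subset_Icc_self)
    _ = ∫ s in Ioc a b, G s * (b - s) ∂(R.measure) := by
      refine setIntegral_congr_fun measurableSet_Ioc fun s hs ↦ ?_
      have hinter : Ici s ∩ Ioc a b = Icc s b := by
        ext x; constructor
        · rintro ⟨hsx, -, hxb⟩; exact ⟨hsx, hxb⟩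
        · rintro ⟨hsx, hxb⟩; exact ⟨hsx, hs.1.trans_le hsx, hxb⟩
      rw [measureReal_restrict_apply _root_.measurableSet_Ici, hinter,
        Real.volume_real_Icc_of_le hs.2, mul_comm]

end StieltjesFunction

theorem revenue_integration_by_parts_general (Ginv : ℝ → ℝ)
    (hGsmooth : ContDiff ℝ 1 Ginv)
    (R : StieltjesFunction ℝ) :
    ∫ t in (0:ℝ)..1, (Ginv t * R t - ∫ s in (0:ℝ)..t, R s * deriv Ginv s)
      = (∫ t in Set.Ioc (0:ℝ) 1, Ginv t * (1 - t) ∂(R.measure)) + R 0 * Ginv 0 := by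
  have hintegrand : ∀ t ∈ uIcc (0:ℝ) 1, Ginv t * R t - ∫ s in (0:ℝ)..t, R s * deriv Ginv s
      = (∫ s in Ioc 0 t, Ginv s ∂(R.measure)) + R 0 * Ginv 0 := fun t ht ↦ by
    rw [uIcc_of_le zero_le_one] at ht
    rw [R.integral_Ioc_eq_sub_integral_mul_deriv hGsmooth ht.1]
    ring
  rw [integral_congr hintegrand, intervalIntegral.integral_add
      (R.intervalIntegrable_setIntegral_Ioc hGsmooth.continuous zero_le_one)
      intervalIntegrable_const,
    R.integral_setIntegral_Ioc hGsmooth.continuous zero_le_one, intervalIntegral.integral_const]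
  simp

/-- Integration-by-parts revenue identity: expected revenue (value times quality minus
information rent, integrated over quantiles) equals the integral of `G⁻¹(t)(1-t)` against the
Lebesgue–Stieltjes measure of the non-decreasing right-continuous `R⁻¹`, plus `R⁻¹(0)·G⁻¹(0)`. -/
theorem revenue_integration_by_parts (Ginv : ℝ → ℝ)
    (hGsmooth : ContDiff ℝ 1 Ginv) (hGmono : Monotone Ginv)
    (R : StieltjesFunction ℝ) (hRnn : ∀ t ∈ Set.Icc (0:ℝ) 1, 0 ≤ R t) :
    ∫ t in (0:ℝ)..1, (Ginv t * R t - ∫ s in (0:ℝ)..t, R s * deriv Ginv s)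
      = (∫ t in Set.Ioc (0:ℝ) 1, Ginv t * (1 - t) ∂(R.measure)) + R 0 * Ginv 0 :=
  revenue_integration_by_parts_general Ginv hGsmooth R
end
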